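/- Under the bounded-noise model, if ℜ(K) ≥ c·k for some constant c > 0 (e.g., when at least a fixed fraction of K is active and A_v ≥ b), then P(S_K < S_{K₀}) ≤ exp(−λk) for λ = 3c²/(12σ² + 4Mc) > 0, i.e., the misselection probability decays exponentially in the neighborhood size k. -/

import Mathlib

/-!
Put weight `w v = 1_{K₀}(v) - 1_K(v)`. Since the signal equals `a` on all of `K₀` and `|K| = |K₀|`,
the event `S_K < S_{K₀}` forces `∑ w v ε v > ℜ(K) ≥ c k`. A third-order Taylor bound gives the
Bernstein estimate `E exp (t w ε) ≤ exp (t² w² σ² (1/2 + 2tM/9))` for `0 ≤ t`, `tM ≤ 1`, and at most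
`2k` weights are nonzero, so Chernoff's bound at `t = c / (2σ² + Mc)` gives `exp (-λ k)`.
-/

open MeasureTheory ProbabilityTheory Finset Real

-- `Real.exp_bound` at order 3 bounds the Taylor remainder by `(4 / (3! * 3)) |x|^3 = (2/9) |x|^3`.
lemma exp_le_one_add_add_mul_sq_of_abs_le {x v : ℝ} (hx : |x| ≤ v) (hv : v ≤ 1) :
    exp x ≤ 1 + x + (1 / 2 + 2 * v / 9) * x ^ 2 := by
  have hrem := (abs_sub_le_iff.1 (exp_bound (hx.trans hv) (n := 3) (by norm_num))).1
  have hcube : |x| ^ 3 ≤ v * x ^ 2 := by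
    rw [pow_succ', sq_abs]
    exact mul_le_mul_of_nonneg_right hx (sq_nonneg _)
  norm_num [Finset.sum_range_succ, Nat.factorial] at hrem
  nlinarith

lemma abs_mul_le_of_abs_le {t w M : ℝ} (hw : |w| ≤ M) : |t * w| ≤ |t| * M := by
  rw [abs_mul]; exact mul_le_mul_of_nonneg_left hw (abs_nonneg t)

section BoundedCentered

variable {Ω : Type*} [MeasurableSpace Ω] {μ : Measure Ω} [IsProbabilityMeasure μ]
  {W : Ω → ℝ} {M : ℝ}

lemma integrable_exp_mul_of_ae_abs_le (hW : AEMeasurable W μ) (hbd : ∀ᵐ ω ∂μ, |W ω| ≤ M)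
    (t : ℝ) : Integrable (fun ω => exp (t * W ω)) μ := by
  refine .of_bound (hW.const_mul t).exp.aestronglyMeasurable (exp (|t| * M)) ?_
  filter_upwards [hbd] with ω hω
  rw [norm_of_nonneg (exp_pos _).le, exp_le_exp]
  exact (le_abs_self _).trans (abs_mul_le_of_abs_le hω)

lemma mgf_le_exp_of_ae_abs_le (hW : AEMeasurable W μ) (hbd : ∀ᵐ ω ∂μ, |W ω| ≤ M)
    (hmean : μ[W] = 0) {t : ℝ} (htM : |t| * M ≤ 1) :
    mgf W μ t ≤ exp (t ^ 2 * variance W μ * (1 / 2 + 2 * (|t| * M) / 9)) := by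
  have hW_int : Integrable W μ := .of_bound hW.aestronglyMeasurable M hbd
  have hW2_int : Integrable (fun ω => W ω ^ 2) μ := by
    refine .of_bound (hW.pow_const 2).aestronglyMeasurable (M ^ 2) ?_
    filter_upwards [hbd] with ω hω
    rw [norm_pow, Real.norm_eq_abs]
    exact pow_le_pow_left₀ (abs_nonneg _) hω 2
  have hlin_int : Integrable (fun ω => 1 + t * W ω) μ :=
    (integrable_const 1).add (hW_int.const_mul t)
  have hvar : variance W μ = ∫ ω, W ω ^ 2 ∂μ := by
    simp [variance_eq_integral hW, hmean]
  have hpoint : ∀ᵐ ω ∂μ,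
      exp (t * W ω) ≤ 1 + t * W ω + (1 / 2 + 2 * (|t| * M) / 9) * t ^ 2 * W ω ^ 2 := by
    filter_upwards [hbd] with ω hω
    have := exp_le_one_add_add_mul_sq_of_abs_le (abs_mul_le_of_abs_le (t := t) hω) htM
    linarith [mul_pow t (W ω) 2]
  calc mgf W μ t = ∫ ω, exp (t * W ω) ∂μ := rfl
    _ ≤ ∫ ω, (1 + t * W ω + (1 / 2 + 2 * (|t| * M) / 9) * t ^ 2 * W ω ^ 2) ∂μ :=
      integral_mono_ae (integrable_exp_mul_of_ae_abs_le hW hbd t)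
        (hlin_int.add (hW2_int.const_mul _)) hpoint
    _ = 1 + t ^ 2 * variance W μ * (1 / 2 + 2 * (|t| * M) / 9) := by
      rw [integral_add hlin_int (hW2_int.const_mul _),
        integral_add (integrable_const 1) (hW_int.const_mul t), integral_const_mul,
        integral_const_mul, hmean, hvar]
      simp only [integral_const, probReal_univ, smul_eq_mul]; ring
    _ ≤ _ := by linarith [add_one_le_exp (t ^ 2 * variance W μ * (1 / 2 + 2 * (|t| * M) / 9))]

lemma measureReal_sum_mul_ge_le_exp {ι : Type*} {ε : ι → Ω → ℝ} (hmeas : ∀ i, Measurable (ε i))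
    (hindep : iIndepFun ε μ) (hbd : ∀ i, ∀ᵐ ω ∂μ, |ε i ω| ≤ M) (hmean : ∀ i, μ[ε i] = 0)
    (s : Finset ι) (w : ι → ℝ) (hw : ∀ i ∈ s, |w i| ≤ 1) {t : ℝ} (ht : 0 ≤ t) (htM : t * M ≤ 1)
    (x : ℝ) :
    μ.real {ω | x ≤ ∑ i ∈ s, w i * ε i ω} ≤
      exp (-t * x + t ^ 2 * (1 / 2 + 2 * (t * M) / 9) * ∑ i ∈ s, w i ^ 2 * variance (ε i) μ) := by
  set Y : ι → Ω → ℝ := fun i ω => w i * ε i ω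
  have hY_meas : ∀ i, Measurable (Y i) := fun i => (hmeas i).const_mul (w i)
  have hY_indep : iIndepFun Y μ := hindep.comp (fun i x => w i * x) fun i => measurable_const_mul _
  have hY_bd : ∀ i ∈ s, ∀ᵐ ω ∂μ, |Y i ω| ≤ M := fun i hi => by
    filter_upwards [hbd i] with ω hω
    rw [abs_mul]
    nlinarith [hw i hi, abs_nonneg (ε i ω)]
  have hY_mgf : ∀ i ∈ s, mgf (Y i) μ t ≤
      exp (t ^ 2 * (1 / 2 + 2 * (t * M) / 9) * (w i ^ 2 * variance (ε i) μ)) := fun i hi => by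
    have := mgf_le_exp_of_ae_abs_le (hY_meas i).aemeasurable (hY_bd i hi)
      (by simp [Y, integral_const_mul, hmean i]) (t := t) (by rwa [abs_of_nonneg ht])
    rw [variance_const_mul, abs_of_nonneg ht] at this
    exact this.trans_eq (by ring_nf)
  have hint : Integrable (fun ω => exp (t * (∑ i ∈ s, Y i) ω)) μ :=
    hY_indep.integrable_exp_mul_sum hY_meas fun i hi =>
      integrable_exp_mul_of_ae_abs_le (hY_meas i).aemeasurable (hY_bd i hi) t
  calc μ.real {ω | x ≤ ∑ i ∈ s, w i * ε i ω}
      = μ.real {ω | x ≤ (∑ i ∈ s, Y i) ω} := by simp only [Finset.sum_apply, Y]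
    _ ≤ exp (-t * x) * mgf (∑ i ∈ s, Y i) μ t := measure_ge_le_exp_mul_mgf x ht hint
    _ ≤ exp (-t * x) * ∏ i ∈ s, exp (t ^ 2 * (1 / 2 + 2 * (t * M) / 9) *
          (w i ^ 2 * variance (ε i) μ)) := by
      rw [hY_indep.mgf_sum hY_meas]
      gcongr with i hi
      · exact fun i _ => mgf_nonneg
      · exact hY_mgf i hi
    _ = _ := by rw [← exp_sum, ← exp_add, ← mul_sum]

end BoundedCentered

section Weights

variable {ι : Type*} [DecidableEq ι]

def diffWeight (s t : Finset ι) (i : ι) : ℝ :=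
  (if i ∈ t then 1 else 0) - (if i ∈ s then 1 else 0)

lemma abs_diffWeight_le_one (s t : Finset ι) (i : ι) : |diffWeight s t i| ≤ 1 := by
  unfold diffWeight; split_ifs <;> norm_num

lemma sum_diffWeight_mul (s t : Finset ι) (f : ι → ℝ) :
    ∑ i ∈ s ∪ t, diffWeight s t i * f i = ∑ i ∈ t, f i - ∑ i ∈ s, f i := by
  simp only [diffWeight, sub_mul, ite_mul, one_mul, zero_mul, sum_sub_distrib, sum_ite_mem,
    union_inter_cancel_right, union_inter_cancel_left]

lemma sum_diffWeight_sq_le (s t : Finset ι) :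
    ∑ i ∈ s ∪ t, diffWeight s t i ^ 2 ≤ #s + #t := by
  calc ∑ i ∈ s ∪ t, diffWeight s t i ^ 2 ≤ ∑ _i ∈ s ∪ t, (1 : ℝ) :=
        sum_le_sum fun i _ => (sq_le_one_iff_abs_le_one _).2 (abs_diffWeight_le_one s t i)
    _ ≤ #s + #t := by rw [sum_const, nsmul_one]; exact_mod_cast card_union_le s t

lemma sum_add_sub_sum_add_eq {s t : Finset ι} {A e : ι → ℝ} {a : ℝ} (hcard : #s = #t)
    (hA : ∀ i ∈ t, A i = a) :
    ∑ i ∈ s, (A i + e i) - ∑ i ∈ t, (A i + e i) =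
      ∑ i ∈ s, (A i - a) - ∑ i ∈ s ∪ t, diffWeight s t i * e i := by
  rw [sum_diffWeight_mul, sum_add_distrib, sum_add_distrib, sum_congr rfl hA, sum_sub_distrib]
  simp only [sum_const, hcard]
  ring

end Weights

-- `t = c / (2s + Mc)` is the Bernstein choice of the Chernoff parameter.
lemma le_bernstein_exponent {s M c t : ℝ} (hs : 0 ≤ s) (hM : 0 < M) (hc : 0 < c)
    (ht : t = c / (2 * s + M * c)) :
    3 * c ^ 2 / (12 * s + 4 * M * c) ≤ t * c - 2 * (t ^ 2 * s * (1 / 2 + 2 * (t * M) / 9)) := by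
  have hd : 0 < 2 * s + M * c := by positivity
  rw [div_le_iff₀ (by positivity), ← sub_nonneg]
  have key : (t * c - 2 * (t ^ 2 * s * (1 / 2 + 2 * (t * M) / 9))) * (12 * s + 4 * M * c)
      - 3 * c ^ 2 = c ^ 2 * (8 / 3 * s ^ 2 * (M * c) + 38 / 9 * s * (M * c) ^ 2 + (M * c) ^ 3)
        / (2 * s + M * c) ^ 3 := by
    rw [ht]; field_simp; ring
  rw [key]
  positivity

theorem stmt_17_general
    {Ω V : Type*} [MeasurableSpace Ω] (μ : Measure Ω) [IsProbabilityMeasure μ]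
    [DecidableEq V]
    (Act : Finset V) (a σ M : ℝ) (hM : 0 < M)
    (Aval : V → ℝ)
    (hInact : ∀ v ∉ Act, Aval v = a)
    (ε : V → Ω → ℝ)
    (hmeas : ∀ v, Measurable (ε v))
    (hindep : iIndepFun ε μ)
    (hmean : ∀ v, ∫ ω, ε v ω ∂μ = 0)
    (hvar : ∀ v, variance (ε v) μ = σ ^ 2)
    (hbd : ∀ v, ∀ᵐ ω ∂μ, |ε v ω| ≤ M)
    (X : V → Ω → ℝ) (hX : ∀ v ω, X v ω = Aval v + ε v ω)
    (K₀ K : Finset V) (k : ℕ)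
    (hKcard : K.card = k) (hK₀card : K₀.card = k)
    (hK₀inact : K₀ ∩ Act = ∅)
    (R : ℝ) (hR : R = ∑ v ∈ K, (Aval v - a))
    (c : ℝ) (hc : 0 < c) (hRk : c * (k : ℝ) ≤ R)
    (lam : ℝ) (hlam : lam = 3 * c ^ 2 / (12 * σ ^ 2 + 4 * M * c)) :
    0 < lam ∧
    (μ {ω | ∑ v ∈ K, X v ω < ∑ v ∈ K₀, X v ω}).toReal
      ≤ Real.exp (-lam * (k : ℝ)) := by
  refine ⟨by rw [hlam]; positivity, ?_⟩
  set t := c / (2 * σ ^ 2 + M * c) with ht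
  have htM : t * M ≤ 1 := by
    rw [ht, div_mul_eq_mul_div, div_le_one (by positivity)]; nlinarith [sq_nonneg σ]
  have hrate := le_bernstein_exponent (sq_nonneg σ) hM hc ht
  rw [← hlam] at hrate
  have hK₀ : ∀ v ∈ K₀, Aval v = a := fun v hv => hInact v fun hvA => by
    simpa [hK₀inact] using mem_inter.2 ⟨hv, hvA⟩
  have hevent : {ω | ∑ v ∈ K, X v ω < ∑ v ∈ K₀, X v ω} ⊆
      {ω | c * k ≤ ∑ v ∈ K ∪ K₀, diffWeight K K₀ v * ε v ω} := fun ω hω => by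
    have := sum_add_sub_sum_add_eq (e := (ε · ω)) (hKcard.trans hK₀card.symm) hK₀
    simp only [Set.mem_ofPred_eq, hX] at hω ⊢
    linarith
  have hweights : ∑ v ∈ K ∪ K₀, diffWeight K K₀ v ^ 2 * variance (ε v) μ ≤ 2 * k * σ ^ 2 := by
    simp only [hvar, ← sum_mul]
    have := sum_diffWeight_sq_le K K₀
    rw [hKcard, hK₀card] at this
    nlinarith [sq_nonneg σ]
  calc (μ {ω | ∑ v ∈ K, X v ω < ∑ v ∈ K₀, X v ω}).toReal
      ≤ μ.real {ω | c * k ≤ ∑ v ∈ K ∪ K₀, diffWeight K K₀ v * ε v ω} := measureReal_mono hevent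
    _ ≤ exp (-t * (c * k) + t ^ 2 * (1 / 2 + 2 * (t * M) / 9) *
          ∑ v ∈ K ∪ K₀, diffWeight K K₀ v ^ 2 * variance (ε v) μ) :=
      measureReal_sum_mul_ge_le_exp hmeas hindep hbd hmean _ _
        (fun v _ => abs_diffWeight_le_one K K₀ v) (by positivity) htM _
    _ ≤ exp (-lam * k) := by
      have hφ : 0 ≤ t ^ 2 * (1 / 2 + 2 * (t * M) / 9) := by positivity
      rw [exp_le_exp]
      linarith [mul_le_mul_of_nonneg_left hweights hφ, mul_le_mul_of_nonneg_left hrate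
        (Nat.cast_nonneg (α := ℝ) k)]

/-- Exponential decay of the misselection probability: if `ℜ(K) ≥ c·k` with `c > 0`,
then `P(S_K < S_{K₀}) ≤ exp(−λk)` with `λ = 3c²/(12σ² + 4Mc)`. -/
theorem stmt_17
    {Ω V : Type*} [MeasurableSpace Ω] (μ : Measure Ω) [IsProbabilityMeasure μ]
    [Fintype V] [DecidableEq V]
    (Act : Finset V) (a b σ M : ℝ) (hab : a < b) (hM : 0 < M)
    (Aval : V → ℝ)
    (hInact : ∀ v ∉ Act, Aval v = a)
    (hAct : ∀ v ∈ Act, b ≤ Aval v)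
    (ε : V → Ω → ℝ)
    (hmeas : ∀ v, Measurable (ε v))
    (hindep : iIndepFun ε μ)
    (hident : ∀ v w, IdentDistrib (ε v) (ε w) μ μ)
    (hmean : ∀ v, ∫ ω, ε v ω ∂μ = 0)
    (hvar : ∀ v, variance (ε v) μ = σ ^ 2)
    (hbd : ∀ v, ∀ᵐ ω ∂μ, |ε v ω| ≤ M)
    (X : V → Ω → ℝ) (hX : ∀ v ω, X v ω = Aval v + ε v ω)
    (K₀ K : Finset V) (k : ℕ)
    (hKcard : K.card = k) (hK₀card : K₀.card = k)
    (hK₀inact : K₀ ∩ Act = ∅)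
    (R : ℝ) (hR : R = ∑ v ∈ K, (Aval v - a))
    (c : ℝ) (hc : 0 < c) (hRk : c * (k : ℝ) ≤ R)
    (lam : ℝ) (hlam : lam = 3 * c ^ 2 / (12 * σ ^ 2 + 4 * M * c)) :
    0 < lam ∧
    (μ {ω | ∑ v ∈ K, X v ω < ∑ v ∈ K₀, X v ω}).toReal
      ≤ Real.exp (-lam * (k : ℝ)) :=
  stmt_17_general μ Act a σ M hM Aval hInact ε hmeas hindep hmean hvar hbd X hX K₀ K k hKcard
    hK₀card hK₀inact R hR c hc hRk lam hlam
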